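/- arXiv:2211.17230 — 2 statements merged into one kernel-verified Lean document; each statement's English description precedes it below -/
import Mathlib

section
/- For a < b, 0 < ΔQ ≤ b − a, ε > 0, with c, ΔC, σ₀, f as above, f is strictly increasing on [σ₀, ∞): for σ₀ ≤ σ₁ < σ₂ one has f(σ₁) < f(σ₂). -/
/-!
Writing `g_σ(x) = exp (-x² / (2σ²))` and `L = b - a`, the translation `x ↦ x - a` gives
`ΔC(σ) = ∫_{-c}^{L-c} g_σ / ∫_0^L g_σ`. For `σ₁ ≤ σ₂` the ratio `g_{σ₂} / g_{σ₁}` increases in `|x|`,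
so the mass of `g_{σ₂}` sits further out than that of `g_{σ₁}`. Folding `[-c, 0]` onto `[0, c]`
and cutting at `c` and `L - c`, the numerator weighs the inner pieces of `[0, L]` more heavily than
the denominator does, hence `ΔC` is antitone in `σ`. Moreover `g_σ(x - c) ≤ e^{c(2L - c)/(2σ²)} g_σ(x)`
on `[0, L]`, which gives `log ΔC(σ) < ε` as soon as `σ ≥ σ₀`. So the subtracted term of `f` is
nonincreasing on `[σ₀, ∞)` while `σ²` increases strictly.
-/

open Real Set

noncomputable def gaussianKernel (σ x : ℝ) : ℝ := exp (-x ^ 2 / (2 * σ ^ 2))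

lemma continuous_gaussianKernel (σ : ℝ) : Continuous (gaussianKernel σ) := by
  unfold gaussianKernel; fun_prop

lemma gaussianKernel_pos (σ x : ℝ) : 0 < gaussianKernel σ x := exp_pos _

lemma gaussianKernel_neg (σ x : ℝ) : gaussianKernel σ (-x) = gaussianKernel σ x := by
  simp only [gaussianKernel, neg_sq]

lemma gaussianKernel_mul_le_mul {σ₁ σ₂ t u : ℝ} (hσ₁ : 0 < σ₁) (hσ : σ₁ ≤ σ₂) (ht : 0 ≤ t)
    (htu : t ≤ u) :
    gaussianKernel σ₁ u * gaussianKernel σ₂ t ≤ gaussianKernel σ₂ u * gaussianKernel σ₁ t := by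
  unfold gaussianKernel
  rw [← exp_add, ← exp_add, exp_le_exp]
  have hinv : (2 * σ₂ ^ 2)⁻¹ ≤ (2 * σ₁ ^ 2)⁻¹ := inv_anti₀ (by positivity) (by gcongr)
  have hsq : t ^ 2 ≤ u ^ 2 := by gcongr
  simp only [div_eq_mul_inv]
  nlinarith [mul_nonneg (sub_nonneg.2 hsq) (sub_nonneg.2 hinv)]

lemma gaussianKernel_sub_le {σ c L x : ℝ} (hc : 0 ≤ c) (hx : x ≤ L) :
    gaussianKernel σ (x - c) ≤ exp (c * (2 * L - c) / (2 * σ ^ 2)) * gaussianKernel σ x := by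
  unfold gaussianKernel
  rw [← exp_add, exp_le_exp, ← add_div]
  gcongr
  nlinarith [mul_le_mul_of_nonneg_left hx hc]

lemma integral_mul_integral_le_of_forall_mul_le {f₁ f₂ : ℝ → ℝ} {p q r t : ℝ} (hpq : p ≤ q)
    (hrt : r ≤ t) (hf₁pq : IntervalIntegrable f₁ MeasureTheory.volume p q)
    (hf₂pq : IntervalIntegrable f₂ MeasureTheory.volume p q)
    (hf₁rt : IntervalIntegrable f₁ MeasureTheory.volume r t)
    (hf₂rt : IntervalIntegrable f₂ MeasureTheory.volume r t)
    (h : ∀ x ∈ Icc p q, ∀ y ∈ Icc r t, f₂ x * f₁ y ≤ f₁ x * f₂ y) :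
    (∫ x in p..q, f₂ x) * (∫ y in r..t, f₁ y) ≤ (∫ x in p..q, f₁ x) * ∫ y in r..t, f₂ y := by
  rw [← intervalIntegral.integral_mul_const, ← intervalIntegral.integral_mul_const]
  refine intervalIntegral.integral_mono_on hpq (hf₂pq.mul_const _) (hf₁pq.mul_const _)
    fun x hx => ?_
  rw [← intervalIntegral.integral_const_mul, ← intervalIntegral.integral_const_mul]
  exact intervalIntegral.integral_mono_on hrt (hf₁rt.const_mul _) (hf₂rt.const_mul _)
    fun y hy => h x hx y hy

lemma intervalIntegrable_gaussianKernel (σ p q : ℝ) :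
    IntervalIntegrable (gaussianKernel σ) MeasureTheory.volume p q :=
  (continuous_gaussianKernel σ).intervalIntegrable p q

lemma integral_gaussianKernel_pos {p q : ℝ} (σ : ℝ) (hpq : p < q) :
    0 < ∫ x in p..q, gaussianKernel σ x :=
  intervalIntegral.intervalIntegral_pos_of_pos (intervalIntegrable_gaussianKernel σ p q)
    (gaussianKernel_pos σ) hpq

/-- `ΔC(σ)` after translating `[a, b]` to `[0, L]`. -/
noncomputable def shiftedMassRatio (c L σ : ℝ) : ℝ :=
  (∫ x in -c..L - c, gaussianKernel σ x) / ∫ x in 0..L, gaussianKernel σ x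

section shiftedMassRatio

variable {c L : ℝ}

lemma shiftedMassRatio_pos (hL : 0 < L) (σ : ℝ) : 0 < shiftedMassRatio c L σ :=
  div_pos (integral_gaussianKernel_pos σ (by linarith)) (integral_gaussianKernel_pos σ hL)

lemma shiftedMassRatio_le_exp (hc : 0 ≤ c) (hL : 0 < L) (σ : ℝ) :
    shiftedMassRatio c L σ ≤ exp (c * (2 * L - c) / (2 * σ ^ 2)) := by
  rw [shiftedMassRatio, div_le_iff₀ (integral_gaussianKernel_pos σ hL),
    ← intervalIntegral.integral_const_mul]
  have hshift := intervalIntegral.integral_comp_sub_right (gaussianKernel σ) (a := 0) (b := L) c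
  rw [zero_sub] at hshift
  rw [← hshift]
  exact intervalIntegral.integral_mono_on hL.le
    (((continuous_gaussianKernel σ).comp (continuous_sub_right c)).intervalIntegrable _ _)
    ((intervalIntegrable_gaussianKernel σ 0 L).const_mul _)
    fun x hx => gaussianKernel_sub_le hc hx.2

/-- Writing `A = ∫₀^c`, `Y = ∫_c^{L-c}`, `Z = ∫_{L-c}^L`, the ratio is `(2A + Y) / (A + Y + Z)`;
the cross-multiplied inequality is a sum of three comparisons of pieces lying left of each other. -/
lemma shiftedMassRatio_antitoneOn (hc : 0 ≤ c) (hcL : 2 * c ≤ L) (hL : 0 < L) :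
    AntitoneOn (shiftedMassRatio c L) (Ioi 0) := by
  intro σ₁ (hσ₁ : 0 < σ₁) σ₂ _ hσ
  let I (σ p q : ℝ) : ℝ := ∫ x in p..q, gaussianKernel σ x
  have hI := intervalIntegrable_gaussianKernel
  have hnum (σ : ℝ) : I σ (-c) (L - c) = 2 * I σ 0 c + I σ c (L - c) := by
    have hfold := intervalIntegral.integral_comp_neg (a := 0) (b := c) (gaussianKernel σ)
    simp only [gaussianKernel_neg, neg_zero] at hfold
    simp only [I, ← intervalIntegral.integral_add_adjacent_intervals (hI σ (-c) 0) (hI σ 0 c),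
      ← intervalIntegral.integral_add_adjacent_intervals (hI σ (-c) c) (hI σ c (L - c)), ← hfold]
    ring
  have hden (σ : ℝ) : I σ 0 L = I σ 0 c + I σ c (L - c) + I σ (L - c) L := by
    simp only [I, intervalIntegral.integral_add_adjacent_intervals (hI σ 0 c) (hI σ c (L - c)),
      intervalIntegral.integral_add_adjacent_intervals (hI σ 0 (L - c)) (hI σ (L - c) L)]
  have hcomp (p q r t : ℝ) (hp : 0 ≤ p) (hpq : p ≤ q) (hqr : q ≤ r) (hrt : r ≤ t) :
      I σ₂ p q * I σ₁ r t ≤ I σ₁ p q * I σ₂ r t :=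
    integral_mul_integral_le_of_forall_mul_le hpq hrt (hI _ _ _) (hI _ _ _) (hI _ _ _) (hI _ _ _)
      fun x hx y hy => by
        simpa only [mul_comm] using
          gaussianKernel_mul_le_mul hσ₁ hσ (hp.trans hx.1) (hx.2.trans (hqr.trans hy.1))
  have hAY := hcomp 0 c c (L - c) le_rfl hc le_rfl (by linarith)
  have hAZ := hcomp 0 c (L - c) L le_rfl hc (by linarith) (by linarith)
  have hYZ := hcomp c (L - c) (L - c) L hc (by linarith) le_rfl (by linarith)
  change I σ₂ (-c) (L - c) / I σ₂ 0 L ≤ I σ₁ (-c) (L - c) / I σ₁ 0 L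
  have hpos (σ : ℝ) : 0 < I σ 0 L := integral_gaussianKernel_pos σ hL
  rw [div_le_div_iff₀ (hpos σ₂) (hpos σ₁), hden, hden, hnum, hnum]
  linear_combination hAY + 2 * hAZ + hYZ

lemma log_shiftedMassRatio_lt {Δ ε σ : ℝ} (hc : 0 ≤ c) (hcΔ : c ≤ Δ) (hΔ : 0 < Δ) (hL : 0 < L)
    (hσ : (L + Δ / 2) * Δ ≤ ε * σ ^ 2) : log (shiftedMassRatio c L σ) < ε := by
  have hK : 0 < (L + Δ / 2) * Δ := by positivity
  have hσ₂ : 0 < σ ^ 2 :=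
    (sq_nonneg σ).lt_of_ne fun h => by rw [← h, mul_zero] at hσ; linarith
  refine (log_le_iff_le_exp (shiftedMassRatio_pos hL σ)).2
    (shiftedMassRatio_le_exp hc hL σ) |>.trans_lt ?_
  rw [div_lt_iff₀ (by positivity)]
  nlinarith [mul_le_mul_of_nonneg_left hcΔ hL.le, sq_nonneg c]

end shiftedMassRatio

lemma integral_exp_div_eq_shiftedMassRatio (a b c σ : ℝ) :
    (∫ x in a..b, exp (-(x - a - c) ^ 2 / (2 * σ ^ 2))) /
        (∫ x in a..b, exp (-(x - a) ^ 2 / (2 * σ ^ 2))) = shiftedMassRatio c (b - a) σ := by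
  have num := intervalIntegral.integral_comp_sub_right (gaussianKernel σ) (a := a) (b := b) (a + c)
  have den := intervalIntegral.integral_comp_sub_right (gaussianKernel σ) (a := a) (b := b) a
  rw [show a - (a + c) = -c by ring, show b - (a + c) = b - a - c by ring] at num
  rw [sub_self] at den
  simp only [shiftedMassRatio, gaussianKernel, sub_add_eq_sub_sub] at num den ⊢
  rw [num, den]

theorem f_strict_mono_general (a b ΔQ ε : ℝ) (hab : a < b)
    (hΔ : 0 < ΔQ) (hε : 0 < ε)
    (c : ℝ) (hc : c = min ΔQ ((b - a) / 2))
    (ΔC : ℝ → ℝ)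
    (hΔC : ∀ σ, ΔC σ = (∫ x in a..b, Real.exp (-(x - a - c)^2 / (2 * σ^2))) /
        (∫ x in a..b, Real.exp (-(x - a)^2 / (2 * σ^2))))
    (σ₀ : ℝ) (hσ₀ : σ₀ = Real.sqrt (((b - a) + ΔQ / 2) * ΔQ / ε))
    (f : ℝ → ℝ)
    (hf : ∀ σ, f σ = σ^2 - ((b - a) + ΔQ / 2) * ΔQ / (ε - Real.log (ΔC σ))) :
    ∀ σ₁ σ₂, σ₀ ≤ σ₁ → σ₁ < σ₂ → f σ₁ < f σ₂ := by
  intro σ₁ σ₂ hσ₀₁ hσ₁₂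
  simp only [hΔC, integral_exp_div_eq_shiftedMassRatio] at hf
  set L := b - a
  set K := (L + ΔQ / 2) * ΔQ
  have hL : 0 < L := sub_pos.2 hab
  have hc₀ : 0 < c := hc ▸ lt_min hΔ (by positivity)
  have hcΔ : c ≤ ΔQ := hc ▸ min_le_left _ _
  have hcL : 2 * c ≤ L := by linarith [hc ▸ min_le_right ΔQ (L / 2)]
  have hσ₀pos : 0 < σ₀ := hσ₀ ▸ sqrt_pos.2 (by positivity)
  have hσ₁ : 0 < σ₁ := hσ₀pos.trans_le hσ₀₁
  have hKσ : K ≤ ε * σ₁ ^ 2 := by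
    have : K / ε ≤ σ₁ ^ 2 := by rw [← sq_sqrt (by positivity : 0 ≤ K / ε), ← hσ₀]; gcongr
    rwa [div_le_iff₀ hε, mul_comm] at this
  have hlog := log_shiftedMassRatio_lt hc₀.le hcΔ hΔ hL hKσ
  have hanti : log (shiftedMassRatio c L σ₂) ≤ log (shiftedMassRatio c L σ₁) :=
    log_le_log (shiftedMassRatio_pos hL σ₂) <|
      shiftedMassRatio_antitoneOn hc₀.le hcL hL hσ₁ (hσ₁.trans hσ₁₂) hσ₁₂.le
  rw [hf, hf]
  have hterm : K / (ε - log (shiftedMassRatio c L σ₂)) ≤ K / (ε - log (shiftedMassRatio c L σ₁)) :=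
    div_le_div_of_nonneg_left (by positivity) (by linarith) (by linarith)
  have hsq : σ₁ ^ 2 < σ₂ ^ 2 := by gcongr
  linarith

theorem f_strict_mono (a b ΔQ ε : ℝ) (hab : a < b)
    (hΔ : 0 < ΔQ) (hΔb : ΔQ ≤ b - a) (hε : 0 < ε)
    (c : ℝ) (hc : c = min ΔQ ((b - a) / 2))
    (ΔC : ℝ → ℝ)
    (hΔC : ∀ σ, ΔC σ = (∫ x in a..b, Real.exp (-(x - a - c)^2 / (2 * σ^2))) /
        (∫ x in a..b, Real.exp (-(x - a)^2 / (2 * σ^2))))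
    (σ₀ : ℝ) (hσ₀ : σ₀ = Real.sqrt (((b - a) + ΔQ / 2) * ΔQ / ε))
    (f : ℝ → ℝ)
    (hf : ∀ σ, f σ = σ^2 - ((b - a) + ΔQ / 2) * ΔQ / (ε - Real.log (ΔC σ))) :
    ∀ σ₁ σ₂, σ₀ ≤ σ₁ → σ₁ < σ₂ → f σ₁ < f σ₂ :=
  f_strict_mono_general a b ΔQ ε hab hΔ hε c hc ΔC hΔC σ₀ hσ₀ f hf
end

section
/- For 𝐚, 𝐛 ∈ ℝᵐ with aᵢ < bᵢ, σ > 0, and 𝐜 ∈ ℝᵐ with 0 < cᵢ ≤ (bᵢ−aᵢ)/2 for all i, the product ratio ΔC_m(σ) = ∏ᵢ (∫_{aᵢ}^{bᵢ} exp(−(x−aᵢ−cᵢ)²/(2σ²)) dx / ∫_{aᵢ}^{bᵢ} exp(−(x−aᵢ)²/(2σ²)) dx) satisfies ΔC_m(σ) > 1. -/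
/-!
Each factor compares the integrals of the Gaussian bump `g x = exp (-x² / (2σ²))` over the
windows `[-c, L - c]` and `[0, L]`, where `L = b - a`. The two windows share `[0, L - c]`, and
since `g` is even the remaining pieces are `∫₀ᶜ g x` and `∫₀ᶜ g (x + (L - c))`; the first is
larger because `g` decreases on `[0, ∞)` and `L - c > 0`. So every factor exceeds `1`, and so
does the product of `m ≥ 1` of them.
-/

open Real Set intervalIntegral

theorem integral_lt_integral_shift_of_even_of_strictAntiOn {f : ℝ → ℝ} (hf : Continuous f)
    (heven : ∀ x, f (-x) = f x) (hanti : StrictAntiOn f (Ici 0)) {c L : ℝ} (hc : 0 < c)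
    (hcL : c < L) :
    ∫ x in 0..L, f x < ∫ x in -c..L - c, f x := by
  have hint : ∀ u v : ℝ, IntervalIntegrable f MeasureTheory.volume u v :=
    hf.intervalIntegrable
  have hleft : ∫ x in -c..0, f x = ∫ x in 0..c, f x := by
    simpa only [heven, neg_zero] using (integral_comp_neg (a := 0) (b := c) f).symm
  have hright : ∫ x in L - c..L, f x = ∫ x in 0..c, f (x + (L - c)) := by
    rw [integral_comp_add_right f (L - c), zero_add, add_sub_cancel]
  have htail : ∫ x in 0..c, f (x + (L - c)) < ∫ x in 0..c, f x := by
    refine integral_lt_integral_of_continuousOn_of_le_of_exists_lt hc (by fun_prop)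
      hf.continuousOn (fun x hx => ?_) ⟨0, ⟨le_rfl, hc.le⟩, ?_⟩
    · exact (hanti (mem_Ici.2 hx.1.le) (mem_Ici.2 (by linarith [hx.1])) (by linarith)).le
    · exact hanti (mem_Ici.2 le_rfl) (mem_Ici.2 (by linarith)) (by linarith)
  rw [← integral_add_adjacent_intervals (hint 0 (L - c)) (hint (L - c) L),
    ← integral_add_adjacent_intervals (hint (-c) 0) (hint 0 (L - c)), hleft, hright]
  linarith

theorem strictAntiOn_exp_neg_sq_div {k : ℝ} (hk : 0 < k) :
    StrictAntiOn (fun x : ℝ => exp (-x ^ 2 / k)) (Ici 0) := by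
  intro x hx y _ hxy
  have hsq : x ^ 2 < y ^ 2 := pow_lt_pow_left₀ hxy (mem_Ici.1 hx) two_ne_zero
  simp only [exp_lt_exp, neg_div]
  exact neg_lt_neg (div_lt_div_of_pos_right hsq hk)

theorem one_lt_integral_exp_shift_div_integral_exp {a b c k : ℝ} (hk : 0 < k) (hc : 0 < c)
    (hcb : c < b - a) :
    1 < (∫ t in a..b, exp (-(t - a - c) ^ 2 / k)) / ∫ t in a..b, exp (-(t - a) ^ 2 / k) := by
  set g : ℝ → ℝ := fun x => exp (-x ^ 2 / k)
  have hshift : ∫ t in a..b, exp (-(t - a - c) ^ 2 / k) = ∫ x in -c..b - a - c, g x := by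
    rw [show -c = a - (a + c) by ring, show b - a - c = b - (a + c) by ring,
      ← integral_comp_sub_right g (a + c)]
    simp only [g, sub_sub]
  have hbase : ∫ t in a..b, exp (-(t - a) ^ 2 / k) = ∫ x in 0..b - a, g x := by
    rw [← sub_self a, ← integral_comp_sub_right g a]
  have hbase_pos : 0 < ∫ x in 0..b - a, g x :=
    intervalIntegral_pos_of_pos_on ((by fun_prop : Continuous g).intervalIntegrable _ _)
      (fun x _ => exp_pos _) (by linarith)
  rw [hshift, hbase, one_lt_div hbase_pos]
  exact integral_lt_integral_shift_of_even_of_strictAntiOn (by fun_prop)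
    (fun x => by simp only [even_two.neg_pow]) (strictAntiOn_exp_neg_sq_div hk) hc hcb

theorem multivariate_deltaC_gt_one (m : ℕ) (hm : 1 ≤ m)
    (a b c : Fin m → ℝ) (σ : ℝ) (hσ : 0 < σ)
    (hab : ∀ i, a i < b i)
    (hc : ∀ i, 0 < c i ∧ c i ≤ (b i - a i) / 2) :
    (∏ i, (∫ t in (a i)..(b i), Real.exp (-(t - a i - c i)^2 / (2 * σ^2))) /
      (∫ t in (a i)..(b i), Real.exp (-(t - a i)^2 / (2 * σ^2)))) > 1 := by
  have hfactor : ∀ i, 1 < (∫ t in (a i)..(b i), exp (-(t - a i - c i) ^ 2 / (2 * σ ^ 2))) /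
      ∫ t in (a i)..(b i), exp (-(t - a i) ^ 2 / (2 * σ ^ 2)) := fun i =>
    one_lt_integral_exp_shift_div_integral_exp (by positivity) (hc i).1
      (by linarith [hab i, (hc i).1, (hc i).2])
  have hne : (Finset.univ : Finset (Fin m)).Nonempty := Finset.univ_nonempty_iff.2 ⟨⟨0, hm⟩⟩
  simpa using Finset.prod_lt_prod_of_nonempty (fun _ _ => one_pos) (fun i _ => hfactor i) hne
end
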